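/- Let $p$ be a prime and consider for each $n \geq 1$ abelian groups fitting in exact sequences $0 \to M/p^n M \to S_n \to T[p^n] \to 0$ compatible with the natural maps $S_n \to S_1$ and $T[p^n] \to T[p]$ (induced by multiplication by $p^{n-1}$), where $T$ is a torsion abelian group whose $p$-primary part is finite and $M$ is finitely generated. Then the image of $M/pM$ in $S_1$ equals the intersection over all $n$ of the images of $S_n$ in $S_1$. -/
import Mathlib


/-- Abstract descent lemma.  Let `p` be a prime, `M` a finitely generated abelian group,
`T` a torsion abelian group whose `p`-primary part is finite, and for each `n ≥ 1` an
exact sequence `0 → M/pⁿM → Sₙ → T[pⁿ] → 0` (encoded by maps `a n : M →+ S n` with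
kernel `pⁿM` and `b n : S n →+ T` with image `T[pⁿ]`), compatible with the natural maps
`t n : Sₙ →+ S₁` (over the projection `M/pⁿM → M/pM` and multiplication by `p^(n-1)` on
`T[pⁿ] → T[p]`).  Then the image of `M/pM` in `S₁` equals the intersection over all
`n ≥ 1` of the images of the `Sₙ` in `S₁`. -/
theorem descent_intersection (p : ℕ) (hp : p.Prime)
    (M T : Type*) [AddCommGroup M] [AddCommGroup T]
    (hM : AddGroup.FG M)
    (hT_tors : ∀ t : T, ∃ m : ℕ, 0 < m ∧ m • t = 0)
    (hT_fin : Set.Finite {t : T | ∃ k : ℕ, p ^ k • t = 0})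
    (S : ℕ → Type*) [∀ n, AddCommGroup (S n)]
    (a : ∀ n, M →+ S n) (b : ∀ n, S n →+ T) (t : ∀ n, S n →+ S 1)
    (ha_ker : ∀ n, 1 ≤ n → ∀ m : M, a n m = 0 ↔ ∃ m' : M, p ^ n • m' = m)
    (hb_range : ∀ n, 1 ≤ n → ∀ x : T, (∃ s, b n s = x) ↔ p ^ n • x = 0)
    (hexact : ∀ n, 1 ≤ n → ∀ s : S n, b n s = 0 ↔ ∃ m, a n m = s)
    (ht_a : ∀ n, 1 ≤ n → (t n).comp (a n) = a 1)
    (ht_b : ∀ n, 1 ≤ n → ∀ s : S n, b 1 (t n s) = p ^ (n - 1) • b n s)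
    (ht_one : t 1 = AddMonoidHom.id (S 1)) :
    ∀ s : S 1, (∃ m, a 1 m = s) ↔ ∀ n, 1 ≤ n → ∃ s' : S n, t n s' = s := by
  classical
  -- uniform bound on the p-primary part of T
  have key : ∃ K : ℕ, ∀ x : T, (∃ k : ℕ, p ^ k • x = 0) → p ^ K • x = 0 := by
    refine ⟨hT_fin.toFinset.sup
      (fun x => if h : ∃ k : ℕ, p ^ k • x = 0 then Nat.find h else 0), ?_⟩
    intro x hx
    have hxF : x ∈ hT_fin.toFinset := hT_fin.mem_toFinset.mpr hx
    have hle : Nat.find hx ≤ hT_fin.toFinset.sup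
        (fun x => if h : ∃ k : ℕ, p ^ k • x = 0 then Nat.find h else 0) := by
      have := Finset.le_sup (f := fun x => if h : ∃ k : ℕ, p ^ k • x = 0 then Nat.find h else 0) hxF
      simpa only [dif_pos hx] using this
    set K := hT_fin.toFinset.sup
        (fun x => if h : ∃ k : ℕ, p ^ k • x = 0 then Nat.find h else 0)
    calc p ^ K • x = (p ^ (K - Nat.find hx) * p ^ (Nat.find hx)) • x := by
          rw [← pow_add, Nat.sub_add_cancel hle]
      _ = p ^ (K - Nat.find hx) • (p ^ (Nat.find hx) • x) := by rw [mul_smul]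
      _ = 0 := by rw [Nat.find_spec hx, smul_zero]
  obtain ⟨K, hK⟩ := key
  intro s
  constructor
  · rintro ⟨m, rfl⟩ n hn
    exact ⟨a n m, by rw [← AddMonoidHom.comp_apply, ht_a n hn]⟩
  · intro h
    obtain ⟨s', hs'⟩ := h (K + 1) (by omega)
    refine (hexact 1 le_rfl s).mp ?_
    have hb' : p ^ (K + 1) • b (K + 1) s' = 0 :=
      (hb_range (K + 1) (by omega) _).mp ⟨s', rfl⟩
    calc b 1 s = b 1 (t (K + 1) s') := by rw [hs']
      _ = p ^ (K + 1 - 1) • b (K + 1) s' := ht_b (K + 1) (by omega) s'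
      _ = 0 := by
          simpa using hK (b (K + 1) s') ⟨K + 1, hb'⟩
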